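/- arXiv:2406.15122 — 2 statements merged into one kernel-verified Lean document; each statement's English description precedes it below -/
import Mathlib

section
/- Suppose a ∈ ℓ¹(ℤ) with â ∈ C¹(𝕋) satisfying μ ≥ â(ω) ≥ ν > 0 and |â'(ω)| ≤ 𝒦 on 𝕋. Let g be the sequence with ĝ = indicator of (−1/4,1/4). Then there exist constants C_a > c_a > 0 (depending only on a and N) such that for each N ∈ ℕ: (i) ∑_{s=0}^{N−1} |(a^(s) ∗ g)(λ)|² ≤ C_a/(1+λ²) for all λ ∈ ℤ, and (ii) ∑_{s=0}^{N−1} |(a^(s) ∗ g)(λ)|² ≥ c_a for λ ∈ {0, −1, 1}. -/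
open scoped Real

/-- Convolution of two sequences on `ℤ`. -/
noncomputable def conv (x y : ℤ → ℂ) (j : ℤ) : ℂ := ∑' k : ℤ, x k * y (j - k)

/-- `s`-fold convolution power of a kernel (`a^(0)` is the Dirac delta). -/
noncomputable def convPow (a : ℤ → ℂ) : ℕ → ℤ → ℂ
  | 0 => fun n => if n = 0 then 1 else 0
  | s + 1 => conv a (convPow a s)

/-- `â(ω) := ∑_{k∈ℤ} a(k) e^{-2πikω}`. -/
noncomputable def ahat (a : ℤ → ℂ) (ω : ℝ) : ℂ :=
  ∑' k : ℤ, a k * Complex.exp (-2 * π * Complex.I * k * ω)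

/-- The sequence whose Fourier transform is the indicator of `(-1/4, 1/4)`. -/
noncomputable def g (n : ℤ) : ℂ :=
  if n = 0 then 1 else 2 * Real.sin (n * Real.pi / 2) / (n * Real.pi)

/-!
On the Fourier side `g` is `2 · 𝟙_(-1/4, 1/4)` and `a^(s)` is `â^s`, so
`(a^(s) ∗ g)(λ) = ∫_{-1/4}^{1/4} 2 â(ω)^s e^{2πiλω} dω`. Bounding the integrand gives
`|(a^(s) ∗ g)(λ)| ≤ μ^s`, and one integration by parts against `e^{2πiλω}` gives
`|λ| |(a^(s) ∗ g)(λ)| ≤ (4μ^s + s μ^(s-1) 𝒦) / (2π)`; squaring and adding yields the decay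
`C_a / (1 + λ²)`. The lower bound comes from the term `s = 0` alone: `a^(0) ∗ g = g`, and
`|g(λ)| ∈ {1, 2/π}` for `|λ| ≤ 1`.
-/

open Complex MeasureTheory Set

-- Turns the double series `∑_j ∑_k x k * y (j - k)` into the product series `∑_(k,m) x k * y m`.
def convIndexEquiv : ℤ × ℤ ≃ ℤ × ℤ where
  toFun p := (p.1 + p.2, p.1)
  invFun q := (q.2, q.1 - q.2)
  left_inv p := by simp
  right_inv q := by simp

section Convolution

variable {x y : ℤ → ℂ}

theorem summable_norm_mul_norm_conv (hx : Summable fun k => ‖x k‖)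
    (hy : Summable fun k => ‖y k‖) :
    Summable fun p : ℤ × ℤ => ‖x p.2‖ * ‖y (p.1 - p.2)‖ := by
  refine convIndexEquiv.summable_iff.1 ?_
  simpa [convIndexEquiv, Function.comp_def] using hx.mul_norm hy

theorem summable_norm_conv (hx : Summable fun k => ‖x k‖) (hy : Summable fun k => ‖y k‖) :
    Summable fun j => ‖conv x y j‖ := by
  have hxy := summable_norm_mul_norm_conv hx hy
  refine hxy.prod.of_nonneg_of_le (fun _ => norm_nonneg _) fun j => ?_
  refine (norm_tsum_le_tsum_norm ?_).trans_eq (tsum_congr fun k => norm_mul _ _)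
  simpa only [norm_mul] using hxy.prod_factor j

theorem ahat_conv (hx : Summable fun k => ‖x k‖) (hy : Summable fun k => ‖y k‖) (ω : ℝ) :
    ahat (conv x y) ω = ahat x ω * ahat y ω := by
  set e : ℤ → ℂ := fun j => cexp (-2 * π * I * j * ω)
  have he_norm : ∀ j, ‖e j‖ = 1 := fun j => by simp [e, Complex.norm_exp]
  have he_add : ∀ k m, e (k + m) = e k * e m := fun k m => by
    simp only [e, ← Complex.exp_add]; push_cast; ring_nf
  have hF : Summable fun p : ℤ × ℤ => x p.2 * y (p.1 - p.2) * e p.1 :=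
    (summable_norm_mul_norm_conv hx hy).of_norm_bounded fun p => by simp [he_norm]
  calc ahat (conv x y) ω = ∑' j, ∑' k, x k * y (j - k) * e j := by
        simp only [ahat, conv, ← tsum_mul_right]
        rfl
    _ = ∑' p : ℤ × ℤ, x p.2 * y (p.1 - p.2) * e p.1 := hF.tsum_prod.symm
    _ = ∑' p : ℤ × ℤ, (x p.1 * e p.1) * (y p.2 * e p.2) := by
        rw [← convIndexEquiv.tsum_eq]
        refine tsum_congr fun p => ?_
        simp only [convIndexEquiv, Equiv.coe_fn_mk, add_sub_cancel_left, he_add]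
        ring
    _ = ahat x ω * ahat y ω :=
        (tsum_mul_tsum_of_summable_norm (f := fun k => x k * e k) (g := fun k => y k * e k)
          (by simpa [he_norm] using hx)
          (by simpa [he_norm] using hy)).symm

end Convolution

section ConvolutionPower

variable {a : ℤ → ℂ}

theorem summable_norm_convPow (ha : Summable fun k => ‖a k‖) :
    ∀ s, Summable fun k => ‖convPow a s k‖
  | 0 => summable_of_ne_finset_zero (s := {0}) fun k hk => by
      simp_all [convPow]
  | s + 1 => summable_norm_conv ha (summable_norm_convPow ha s)

theorem ahat_convPow (ha : Summable fun k => ‖a k‖) (s : ℕ) (ω : ℝ) :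
    ahat (convPow a s) ω = ahat a ω ^ s := by
  induction s with
  | zero => simp [ahat, convPow, tsum_ite_eq]
  | succ s ih =>
    rw [convPow, ahat_conv ha (summable_norm_convPow ha s), ih, pow_succ']

end ConvolutionPower

theorem g_eq_integral (n : ℤ) :
    g n = ∫ ω in (-1/4 : ℝ)..1/4, 2 * cexp (2 * π * I * n * ω) := by
  rw [intervalIntegral.integral_const_mul]
  rcases eq_or_ne n 0 with rfl | hn
  · norm_num [g]
  · have hc : (2 * π * I * n : ℂ) ≠ 0 := by simp [Real.pi_ne_zero, hn]
    rw [integral_exp_mul_complex hc, g, if_neg hn, ofReal_sin, Complex.sin]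
    field_simp
    push_cast
    ring_nf
    rw [I_sq]
    ring_nf

theorem conv_g_eq_integral {h : ℤ → ℂ} (hh : Summable fun k => ‖h k‖) (lam : ℤ) :
    conv h g lam = ∫ ω in (-1/4 : ℝ)..1/4, 2 * ahat h ω * cexp (2 * π * I * lam * ω) := by
  have hsum : HasSum (fun k => ∫ ω in (-1/4 : ℝ)..1/4,
      h k * (2 * cexp (2 * π * I * (lam - k : ℤ) * ω)))
      (∫ ω in (-1/4 : ℝ)..1/4, 2 * ahat h ω * cexp (2 * π * I * lam * ω)) := by
    refine intervalIntegral.hasSum_integral_of_dominated_convergence (fun k _ => ‖h k‖ * 2)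
      (fun k => by fun_prop) (fun k => ae_of_all _ fun ω _ => ?_)
      (ae_of_all _ fun _ _ => hh.mul_right 2) intervalIntegrable_const
      (ae_of_all _ fun ω _ => ?_)
    · simp [Complex.norm_exp]
    · have hfourier : HasSum (fun k => h k * cexp (-2 * π * I * k * ω)) (ahat h ω) :=
        (hh.of_norm_bounded fun k => by simp [Complex.norm_exp]).hasSum
      have hshift : ∀ k : ℤ, h k * (2 * cexp (2 * π * I * (lam - k : ℤ) * ω)) =
          h k * cexp (-2 * π * I * k * ω) * (2 * cexp (2 * π * I * lam * ω)) := fun k => by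
        rw [show cexp (2 * π * I * (lam - k : ℤ) * ω) =
            cexp (-2 * π * I * k * ω) * cexp (2 * π * I * lam * ω) by
          rw [← Complex.exp_add]; push_cast; ring_nf]
        ring
      rw [funext hshift, show 2 * ahat h ω * cexp (2 * π * I * lam * ω) =
        ahat h ω * (2 * cexp (2 * π * I * lam * ω)) by ring]
      exact hfourier.mul_right _
  rw [conv, ← hsum.tsum_eq]
  refine tsum_congr fun k => ?_
  rw [g_eq_integral, ← intervalIntegral.integral_const_mul]

theorem norm_conv_g_le {h : ℤ → ℂ} (hh : Summable fun k => ‖h k‖) {M : ℝ}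
    (hM : ∀ ω, ‖ahat h ω‖ ≤ M) (lam : ℤ) : ‖conv h g lam‖ ≤ M := by
  rw [conv_g_eq_integral hh]
  refine (intervalIntegral.norm_integral_le_of_norm_le_const (C := 2 * M) fun ω _ => ?_).trans_eq
    (by norm_num; ring)
  simpa [Complex.norm_exp] using mul_le_mul_of_nonneg_left (hM ω) zero_le_two

theorem intervalIntegrable_of_hasDerivAt_of_norm_le {E : Type*} [NormedAddCommGroup E]
    [NormedSpace ℝ E] [CompleteSpace E] {f f' : ℝ → E} {a b D : ℝ} (hf : ∀ x, HasDerivAt f (f' x) x)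
    (hD : ∀ x ∈ uIoc a b, ‖f' x‖ ≤ D) : IntervalIntegrable f' volume a b := by
  have hf' : f' = deriv f := funext fun x => (hf x).deriv.symm
  refine (intervalIntegrable_const (c := D)).mono_fun' (hf' ▸ aestronglyMeasurable_deriv f _) ?_
  exact (ae_restrict_iff' measurableSet_uIoc).2 (ae_of_all _ hD)

theorem norm_integral_mul_cexp_le {u u' : ℝ → ℂ} {a b M D : ℝ} {c : ℂ} (hab : a ≤ b)
    (hc : c ≠ 0) (hc_re : c.re = 0) (hu : ∀ x, HasDerivAt u (u' x) x)
    (hM : ∀ x ∈ Icc a b, ‖u x‖ ≤ M) (hD : ∀ x ∈ Icc a b, ‖u' x‖ ≤ D) :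
    ‖∫ x in a..b, u x * cexp (c * x)‖ ≤ (2 * M + D * (b - a)) / ‖c‖ := by
  have hv : ∀ x : ℝ, HasDerivAt (fun y : ℝ => cexp (c * y) / c) (cexp (c * x)) x := fun x => by
    simpa [mul_div_cancel_right₀ _ hc] using
      (((hasDerivAt_id (x : ℂ)).const_mul c).cexp.comp_ofReal).div_const c
  have hv_norm : ∀ x : ℝ, ‖cexp (c * x) / c‖ = 1 / ‖c‖ := fun x => by
    simp [Complex.norm_exp, hc_re]
  have hIoc : uIoc a b ⊆ Icc a b := by
    rw [uIoc_of_le hab]; exact Ioc_subset_Icc_self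
  have hu'_int : IntervalIntegrable u' volume a b :=
    intervalIntegrable_of_hasDerivAt_of_norm_le hu fun x hx => hD x (hIoc hx)
  rw [intervalIntegral.integral_mul_deriv_eq_deriv_mul (fun x _ => hu x) (fun x _ => hv x)
    hu'_int ((by fun_prop : Continuous fun x : ℝ => cexp (c * x)).intervalIntegrable _ _)]
  have hboundary : ∀ x ∈ Icc a b, ‖u x * (cexp (c * x) / c)‖ ≤ M / ‖c‖ := fun x hx => by
    rw [norm_mul, hv_norm, mul_one_div]
    gcongr
    exact hM x hx
  have hbulk : ‖∫ x in a..b, u' x * (cexp (c * x) / c)‖ ≤ D / ‖c‖ * (b - a) := by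
    refine (intervalIntegral.norm_integral_le_of_norm_le_const fun x hx => ?_).trans_eq
      (by rw [abs_of_nonneg (sub_nonneg.2 hab)])
    rw [norm_mul, hv_norm, mul_one_div]
    gcongr
    exact hD x (hIoc hx)
  calc _ ≤ M / ‖c‖ + M / ‖c‖ + D / ‖c‖ * (b - a) :=
        (norm_sub_le_of_le (norm_sub_le_of_le (hboundary b ⟨hab, le_rfl⟩)
          (hboundary a ⟨le_rfl, hab⟩)) hbulk)
    _ = (2 * M + D * (b - a)) / ‖c‖ := by ring

theorem abs_mul_norm_conv_g_le {h : ℤ → ℂ} (hh : Summable fun k => ‖h k‖) {h' : ℝ → ℂ}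
    {M D : ℝ} (hderiv : ∀ ω, HasDerivAt (ahat h) (h' ω) ω) (hM : ∀ ω, ‖ahat h ω‖ ≤ M)
    (hD : ∀ ω, ‖h' ω‖ ≤ D) (lam : ℤ) :
    |(lam : ℝ)| * ‖conv h g lam‖ ≤ (4 * M + D) / (2 * π) := by
  have hM0 : 0 ≤ M := (norm_nonneg _).trans (hM 0)
  have hD0 : 0 ≤ D := (norm_nonneg _).trans (hD 0)
  rcases eq_or_ne lam 0 with rfl | hlam
  · simp only [Int.cast_zero, abs_zero, zero_mul]
    positivity
  have hlam_pos : 0 < |(lam : ℝ)| := by positivity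
  have hc : (2 * π * I * lam : ℂ) ≠ 0 := by simp [Real.pi_ne_zero, hlam]
  have hc_norm : ‖(2 * π * I * lam : ℂ)‖ = 2 * π * |(lam : ℝ)| := by
    simp [abs_of_pos Real.pi_pos]
  have hibp := norm_integral_mul_cexp_le (u := fun ω => 2 * ahat h ω) (M := 2 * M) (D := 2 * D)
    (by norm_num : (-1/4 : ℝ) ≤ 1/4) hc (by simp) (fun ω => (hderiv ω).const_mul 2)
    (fun ω _ => by simpa using mul_le_mul_of_nonneg_left (hM ω) zero_le_two)
    (fun ω _ => by simpa using mul_le_mul_of_nonneg_left (hD ω) zero_le_two)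
  rw [conv_g_eq_integral hh, ← le_div_iff₀' hlam_pos]
  refine hibp.trans_eq ?_
  rw [hc_norm]
  field_simp
  ring

theorem conv_convPow_zero (a y : ℤ → ℂ) : conv (convPow a 0) y = y := by
  funext j
  simp [conv, convPow, ite_mul, tsum_ite_eq]

section ConvolutionPowerBounds

variable {a : ℤ → ℂ} {μ : ℝ} (ha : Summable fun k => ‖a k‖) (hμ : ∀ ω, ‖ahat a ω‖ ≤ μ)
include ha hμ

theorem norm_conv_convPow_g_le (s : ℕ) (lam : ℤ) : ‖conv (convPow a s) g lam‖ ≤ μ ^ s := by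
  refine norm_conv_g_le (summable_norm_convPow ha s) (fun ω => ?_) lam
  rw [ahat_convPow ha, norm_pow]
  exact pow_le_pow_left₀ (norm_nonneg _) (hμ ω) s

theorem abs_mul_norm_conv_convPow_g_le {a' : ℝ → ℂ} {K : ℝ}
    (hderiv : ∀ ω, HasDerivAt (ahat a) (a' ω) ω) (hK : ∀ ω, ‖a' ω‖ ≤ K) (s : ℕ) (lam : ℤ) :
    |(lam : ℝ)| * ‖conv (convPow a s) g lam‖ ≤ (4 * μ ^ s + s * μ ^ (s - 1) * K) / (2 * π) := by
  have hμ0 : 0 ≤ μ := (norm_nonneg _).trans (hμ 0)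
  refine abs_mul_norm_conv_g_le (summable_norm_convPow ha s)
    (h' := fun ω => s * ahat a ω ^ (s - 1) * a' ω) (fun ω => ?_) (fun ω => ?_) (fun ω => ?_) lam
  · rw [funext (ahat_convPow ha s)]
    exact (hderiv ω).fun_pow s
  · rw [ahat_convPow ha, norm_pow]
    exact pow_le_pow_left₀ (norm_nonneg _) (hμ ω) s
  · simp only [norm_mul, norm_pow, Complex.norm_natCast]
    gcongr
    exacts [hμ ω, hK ω]

end ConvolutionPowerBounds

theorem one_add_sq_mul_sq_le {x l A B : ℝ} (hx : 0 ≤ x) (hA : x ≤ A) (hB : |l| * x ≤ B) :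
    (1 + l ^ 2) * x ^ 2 ≤ A ^ 2 + B ^ 2 := by
  have hA2 : x ^ 2 ≤ A ^ 2 := pow_le_pow_left₀ hx hA 2
  have hB2 : (|l| * x) ^ 2 ≤ B ^ 2 := pow_le_pow_left₀ (by positivity) hB 2
  rw [mul_pow, sq_abs] at hB2
  linarith

theorem four_div_pi_sq_lt_one : 4 / π ^ 2 < 1 := by
  rw [div_lt_one (by positivity)]
  nlinarith [Real.pi_gt_three]

theorem four_div_pi_sq_le_norm_g_sq {n : ℤ} (hn : n = 0 ∨ n = 1 ∨ n = -1) :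
    4 / π ^ 2 ≤ ‖g n‖ ^ 2 := by
  rcases hn with rfl | rfl | rfl
  · simpa [g] using four_div_pi_sq_lt_one.le
  all_goals norm_num [g, neg_div, abs_of_pos Real.pi_pos, div_pow]

theorem conv_power_two_sided_bounds_general (a : ℤ → ℂ) (ha : Summable fun k => ‖a k‖)
    (μ ν K : ℝ) (hν : 0 < ν) (a' : ℝ → ℂ)
    (hderiv : ∀ ω : ℝ, HasDerivAt (ahat a) (a' ω) ω)
    (hreal : ∀ ω : ℝ, (ahat a ω).im = 0)
    (hlb : ∀ ω : ℝ, ν ≤ (ahat a ω).re) (hub : ∀ ω : ℝ, (ahat a ω).re ≤ μ)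
    (hK : ∀ ω : ℝ, ‖a' ω‖ ≤ K) :
    ∀ N : ℕ, 1 ≤ N → ∃ Ca ca : ℝ, 0 < ca ∧ ca < Ca ∧
      (∀ lam : ℤ, ∑ s ∈ Finset.range N, ‖conv (convPow a s) g lam‖ ^ 2 ≤
        Ca / (1 + (lam : ℝ) ^ 2)) ∧
      (∀ lam : ℤ, lam = 0 ∨ lam = 1 ∨ lam = -1 →
        ca ≤ ∑ s ∈ Finset.range N, ‖conv (convPow a s) g lam‖ ^ 2) := by
  intro N hN
  have hμ : ∀ ω, ‖ahat a ω‖ ≤ μ := fun ω => by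
    rw [← Complex.abs_re_eq_norm.2 (hreal ω), abs_of_nonneg (hν.le.trans (hlb ω))]
    exact hub ω
  set B : ℕ → ℝ := fun s => (4 * μ ^ s + s * μ ^ (s - 1) * K) / (2 * π)
  have hterm (s : ℕ) (lam : ℤ) :
      (1 + (lam : ℝ) ^ 2) * ‖conv (convPow a s) g lam‖ ^ 2 ≤ (μ ^ s) ^ 2 + B s ^ 2 :=
    one_add_sq_mul_sq_le (norm_nonneg _) (norm_conv_convPow_g_le ha hμ s lam)
      (abs_mul_norm_conv_convPow_g_le ha hμ hderiv hK s lam)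
  have h0 : 0 ∈ Finset.range N := Finset.mem_range.2 hN
  refine ⟨∑ s ∈ Finset.range N, ((μ ^ s) ^ 2 + B s ^ 2), 4 / π ^ 2, by positivity, ?_,
    fun lam => ?_, fun lam hlam => ?_⟩
  · calc 4 / π ^ 2 < 1 := four_div_pi_sq_lt_one
      _ ≤ (μ ^ 0) ^ 2 + B 0 ^ 2 := by simp [sq_nonneg]
      _ ≤ _ := Finset.single_le_sum (f := fun s => (μ ^ s) ^ 2 + B s ^ 2)
          (fun s _ => by positivity) h0
  · rw [le_div_iff₀ (by positivity), Finset.sum_mul]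
    exact Finset.sum_le_sum fun s _ => by linarith [hterm s lam]
  · calc 4 / π ^ 2 ≤ ‖conv (convPow a 0) g lam‖ ^ 2 := by
          rw [conv_convPow_zero]; exact four_div_pi_sq_le_norm_g_sq hlam
      _ ≤ _ := Finset.single_le_sum (f := fun s => ‖conv (convPow a s) g lam‖ ^ 2)
          (fun s _ => by positivity) h0

/-- under the kernel conditions `μ ≥ â ≥ ν > 0`, `|â'| ≤ 𝒦`, for each
`N ≥ 1` there exist constants `C_a > c_a > 0` with
`∑_{s<N} |(a^(s) ∗ g)(λ)|² ≤ C_a/(1+λ²)` for all `λ ∈ ℤ`, and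
`∑_{s<N} |(a^(s) ∗ g)(λ)|² ≥ c_a` for `λ ∈ {0, −1, 1}`. -/
theorem conv_power_two_sided_bounds (a : ℤ → ℂ) (ha : Summable fun k => ‖a k‖)
    (μ ν K : ℝ) (hν : 0 < ν) (a' : ℝ → ℂ)
    (hderiv : ∀ ω : ℝ, HasDerivAt (ahat a) (a' ω) ω) (hcont : Continuous a')
    (hreal : ∀ ω : ℝ, (ahat a ω).im = 0)
    (hlb : ∀ ω : ℝ, ν ≤ (ahat a ω).re) (hub : ∀ ω : ℝ, (ahat a ω).re ≤ μ)
    (hK : ∀ ω : ℝ, ‖a' ω‖ ≤ K) :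
    ∀ N : ℕ, 1 ≤ N → ∃ Ca ca : ℝ, 0 < ca ∧ ca < Ca ∧
      (∀ lam : ℤ, ∑ s ∈ Finset.range N, ‖conv (convPow a s) g lam‖ ^ 2 ≤
        Ca / (1 + (lam : ℝ) ^ 2)) ∧
      (∀ lam : ℤ, lam = 0 ∨ lam = 1 ∨ lam = -1 →
        ca ≤ ∑ s ∈ Finset.range N, ‖conv (convPow a s) g lam‖ ^ 2) :=
  conv_power_two_sided_bounds_general a ha μ ν K hν a' hderiv hreal hlb hub hK
end

section
/- Let a ∈ ℓ¹(ℤ) with â continuous, and suppose that for every ω ∈ 𝕋 the values â((ω+j)/m), j ∈ {0,…,m−1}, are pairwise distinct. Then the block multiplication operator 𝔄_m^{−1} on (L²(𝕋))^m defined by pointwise inversion of the Vandermonde matrices 𝔄_m(ω) (with nodes conj(â((ω+j)/m)) and rows indexed by powers 0,…,m−1) is a bounded operator, with ‖𝔄_m^{−1}‖_op ≤ √m · 𝔠^{−(m−1)} · (1 + max_ω |â(ω)|)^{m−1}, where 𝔠 = min_{i≠j} min_ω |â((ω+j)/m) − â((ω+i)/m)| > 0. -/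
open MeasureTheory
open scoped Real

/-- The Vandermonde matrix `𝔄_m(ω)` with `(k,j)` entry `conj(â((ω+j)/m))^k`. -/
noncomputable def vandA (a : ℤ → ℂ) (m : ℕ) (ω : ℝ) : Matrix (Fin m) (Fin m) ℂ :=
  fun k j => (starRingEnd ℂ) (ahat a ((ω + j) / m)) ^ (k : ℕ)

/-- Operator (spectral) norm of a complex matrix, acting `ℓ² → ℓ²`. -/
noncomputable def matOpNorm {m n : ℕ} (M : Matrix (Fin m) (Fin n) ℂ) : ℝ :=
  ‖LinearMap.toContinuousLinearMap (Matrix.toEuclideanLin M)‖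

/-- The torus `𝕋`, identified with `[0,1) ⊂ ℝ` with Lebesgue measure. -/
noncomputable def μT : Measure ℝ := MeasureTheory.volume.restrict (Set.Ico (0 : ℝ) 1)

/-!
For distinct nodes `x₀, …, x_{m-1}`, the inverse of the transposed Vandermonde matrix has as
`i`-th row the coefficients of the Lagrange basis polynomial `∏_{j ≠ i} (X - x_j) / (x_i - x_j)`.
Multiplying by `X - x_j` multiplies the `ℓ¹`-norm of the coefficients by at most `1 + |x_j|`,
so that row has `ℓ¹`-norm at most `𝔠^{-(m-1)} (1 + max |x_j|)^{m-1}`, and a matrix whose rows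
have `ℓ¹`-norm `≤ D` has spectral norm `≤ √m D`. This pointwise bound passes to the multiplication operator on `L²`.
The constant `𝔠` is positive because the set of node gaps is a finite union of ranges of
continuous periodic functions, hence compact, so its infimum is one of the (nonzero) gaps.
-/

open Polynomial Set
open scoped Matrix ComplexConjugate

namespace Polynomial

variable {R : Type*} [NormedCommRing R]

noncomputable def l1Norm (p : R[X]) : ℝ := ∑' k, ‖p.coeff k‖

theorem summable_norm_coeff (p : R[X]) : Summable fun k => ‖p.coeff k‖ :=
  summable_of_ne_finset_zero (s := p.support) fun k hk => by simp [notMem_support_iff.mp hk]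

theorem l1Norm_nonneg (p : R[X]) : 0 ≤ l1Norm p :=
  tsum_nonneg fun _ => norm_nonneg _

theorem sum_fin_norm_coeff_le_l1Norm (p : R[X]) (n : ℕ) :
    ∑ k : Fin n, ‖p.coeff k‖ ≤ l1Norm p := by
  rw [Fin.sum_univ_eq_sum_range (fun k => ‖p.coeff k‖)]
  exact (summable_norm_coeff p).sum_le_tsum _ fun _ _ => norm_nonneg _

theorem l1Norm_sub_le (p q : R[X]) : l1Norm (p - q) ≤ l1Norm p + l1Norm q := by
  rw [l1Norm, l1Norm, l1Norm, ← (summable_norm_coeff p).tsum_add (summable_norm_coeff q)]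
  refine (summable_norm_coeff _).tsum_le_tsum (fun k => ?_)
    ((summable_norm_coeff p).add (summable_norm_coeff q))
  rw [coeff_sub]
  exact norm_sub_le _ _

theorem l1Norm_mul_C_le (p : R[X]) (w : R) : l1Norm (p * C w) ≤ l1Norm p * ‖w‖ := by
  rw [l1Norm, l1Norm, ← (summable_norm_coeff p).tsum_mul_right]
  refine (summable_norm_coeff _).tsum_le_tsum (fun k => ?_)
    ((summable_norm_coeff p).mul_right _)
  rw [coeff_mul_C]
  exact norm_mul_le _ _

theorem l1Norm_C_mul_le (w : R) (p : R[X]) : l1Norm (C w * p) ≤ ‖w‖ * l1Norm p := by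
  rw [mul_comm, mul_comm ‖w‖]
  exact l1Norm_mul_C_le p w

theorem l1Norm_mul_X (p : R[X]) : l1Norm (p * X) = l1Norm p := by
  rw [l1Norm, (summable_norm_coeff _).tsum_eq_zero_add]
  simp [l1Norm]

theorem l1Norm_mul_X_sub_C_le (p : R[X]) (w : R) :
    l1Norm (p * (X - C w)) ≤ l1Norm p * (1 + ‖w‖) := by
  calc l1Norm (p * (X - C w)) = l1Norm (p * X - p * C w) := by rw [mul_sub]
    _ ≤ l1Norm (p * X) + l1Norm (p * C w) := l1Norm_sub_le _ _
    _ ≤ l1Norm p + l1Norm p * ‖w‖ := by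
      rw [l1Norm_mul_X]
      gcongr
      exact l1Norm_mul_C_le p w
    _ = l1Norm p * (1 + ‖w‖) := by ring

theorem l1Norm_prod_X_sub_C_le [NormOneClass R] {ι : Type*} (s : Finset ι) (v : ι → R) :
    l1Norm (∏ j ∈ s, (X - C (v j))) ≤ ∏ j ∈ s, (1 + ‖v j‖) := by
  classical
  induction s using Finset.induction_on with
  | empty => simp [l1Norm, coeff_one, apply_ite (‖·‖)]
  | insert i s hi ih =>
    rw [Finset.prod_insert hi, Finset.prod_insert hi, mul_comm, mul_comm (1 + _)]
    exact (l1Norm_mul_X_sub_C_le _ _).trans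
      (mul_le_mul_of_nonneg_right ih (by positivity))

end Polynomial

namespace Lagrange

variable {K ι : Type*} [NormedField K] [DecidableEq ι]

theorem basis_eq_C_mul_prod (s : Finset ι) (v : ι → K) (i : ι) :
    Lagrange.basis s v i =
      C (∏ j ∈ s.erase i, (v i - v j)⁻¹) * ∏ j ∈ s.erase i, (X - C (v j)) := by
  rw [Lagrange.basis, map_prod, ← Finset.prod_mul_distrib]
  rfl

theorem l1Norm_basis_le {s : Finset ι} {v : ι → K} {i : ι} {c M : ℝ} (hc : 0 < c)
    (hsep : ∀ j ∈ s, j ≠ i → c ≤ ‖v i - v j‖) (hM : ∀ j ∈ s, ‖v j‖ ≤ M) (hi : i ∈ s) :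
    l1Norm (Lagrange.basis s v i) ≤ c⁻¹ ^ (s.card - 1) * (1 + M) ^ (s.card - 1) := by
  have hcard : (s.erase i).card = s.card - 1 := Finset.card_erase_of_mem hi
  have hscale : ‖∏ j ∈ s.erase i, (v i - v j)⁻¹‖ ≤ c⁻¹ ^ (s.card - 1) := by
    rw [norm_prod, ← hcard, ← Finset.prod_const]
    refine Finset.prod_le_prod (fun _ _ => norm_nonneg _) fun j hj => ?_
    obtain ⟨hji, hj⟩ := Finset.mem_erase.mp hj
    rw [norm_inv]
    exact inv_anti₀ hc (hsep j hj hji)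
  have hprod : l1Norm (∏ j ∈ s.erase i, (X - C (v j))) ≤ (1 + M) ^ (s.card - 1) := by
    refine (l1Norm_prod_X_sub_C_le _ _).trans ?_
    rw [← hcard, ← Finset.prod_const]
    exact Finset.prod_le_prod (fun _ _ => by positivity)
      fun j hj => by linarith [hM j (Finset.mem_of_mem_erase hj)]
  rw [basis_eq_C_mul_prod]
  refine (l1Norm_C_mul_le _ _).trans (mul_le_mul hscale hprod (l1Norm_nonneg _) (by positivity))

end Lagrange

namespace Matrix

variable {n : ℕ}

theorem inv_vandermonde_transpose {K : Type*} [Field K] {v : Fin n → K} (hv : Function.Injective v) :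
    (vandermonde v)ᵀ⁻¹ = of fun i k : Fin n => (Lagrange.basis Finset.univ v i).coeff k := by
  refine inv_eq_left_inv ?_
  ext i j
  have hinj : Set.InjOn v (Finset.univ : Finset (Fin n)) := hv.injOn
  have hdeg : (Lagrange.basis Finset.univ v i).natDegree < n := by
    rw [Lagrange.natDegree_basis hinj (Finset.mem_univ i), Finset.card_univ, Fintype.card_fin]
    exact Nat.sub_lt i.pos one_pos
  rw [mul_apply, one_apply]
  simp only [of_apply, transpose_apply, vandermonde_apply]
  rw [Fin.sum_univ_eq_sum_range (fun k => (Lagrange.basis Finset.univ v i).coeff k * v j ^ k),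
    ← eval_eq_sum_range' hdeg]
  split_ifs with hij
  · subst hij; exact Lagrange.eval_basis_self hinj (Finset.mem_univ i)
  · exact Lagrange.eval_basis_of_ne hij (Finset.mem_univ j)

theorem sum_norm_inv_vandermonde_transpose_le {K : Type*} [NormedField K]
    {v : Fin n → K} {c M : ℝ} (hc : 0 < c) (hsep : ∀ i j, i ≠ j → c ≤ ‖v i - v j‖)
    (hM : ∀ j, ‖v j‖ ≤ M) (i : Fin n) :
    ∑ k, ‖(vandermonde v)ᵀ⁻¹ i k‖ ≤ c⁻¹ ^ (n - 1) * (1 + M) ^ (n - 1) := by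
  have hv : Function.Injective v := fun i j hij =>
    by_contra fun hne => by simpa [hij] using hc.trans_le (hsep i j hne)
  rw [inv_vandermonde_transpose hv]
  simpa using (Polynomial.sum_fin_norm_coeff_le_l1Norm _ n).trans
    (Lagrange.l1Norm_basis_le hc (fun j _ hji => hsep i j hji.symm) (fun j _ => hM j)
      (Finset.mem_univ i))

end Matrix

theorem EuclideanSpace.norm_mulVec_le_of_sum_norm_le {𝕜 ι κ : Type*} [RCLike 𝕜] [Fintype ι]
    [Fintype κ] {W : Matrix ι κ 𝕜} {D : ℝ} (hW : ∀ i, ∑ k, ‖W i k‖ ≤ D)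
    (v : EuclideanSpace 𝕜 κ) :
    ‖(WithLp.equiv 2 (ι → 𝕜)).symm (W.mulVec (WithLp.equiv 2 (κ → 𝕜) v))‖ ≤
      √(Fintype.card ι) * D * ‖v‖ := by
  have hentry : ∀ i, ‖W.mulVec (WithLp.equiv 2 (κ → 𝕜) v) i‖ ≤ D * ‖v‖ := fun i =>
    calc ‖W.mulVec (WithLp.equiv 2 (κ → 𝕜) v) i‖ ≤ ∑ k, ‖W i k‖ * ‖v k‖ :=
          (norm_sum_le _ _).trans_eq (by simp [norm_mul])
      _ ≤ ∑ k, ‖W i k‖ * ‖v‖ :=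
          Finset.sum_le_sum fun k _ => by gcongr; exact PiLp.norm_apply_le v k
      _ ≤ D * ‖v‖ := by rw [← Finset.sum_mul]; gcongr; exact hW i
  rcases isEmpty_or_nonempty ι with hι | ⟨⟨i⟩⟩
  · simp [Subsingleton.elim _ (0 : ι → 𝕜)]
  have hD : 0 ≤ D * ‖v‖ := (norm_nonneg _).trans (hentry i)
  calc ‖(WithLp.equiv 2 (ι → 𝕜)).symm (W.mulVec (WithLp.equiv 2 (κ → 𝕜) v))‖
      = √(∑ i, ‖W.mulVec (WithLp.equiv 2 (κ → 𝕜) v) i‖ ^ 2) := EuclideanSpace.norm_eq _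
    _ ≤ √(∑ _i : ι, (D * ‖v‖) ^ 2) := by gcongr with i; exact hentry i
    _ = √(Fintype.card ι) * D * ‖v‖ := by
      rw [Finset.sum_const, Finset.card_univ, nsmul_eq_mul, Real.sqrt_mul (Nat.cast_nonneg _),
        Real.sqrt_sq hD, mul_assoc]

theorem continuous_ahat {a : ℤ → ℂ} (ha : Summable fun k => ‖a k‖) : Continuous (ahat a) := by
  refine continuous_tsum (fun k => by fun_prop) ha fun k ω => ?_
  have : -2 * π * Complex.I * k * ω = ((-2 * π * k * ω : ℝ) : ℂ) * Complex.I := by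
    push_cast; ring
  rw [norm_mul, this, Complex.norm_exp_ofReal_mul_I, mul_one]

theorem ahat_periodic (a : ℤ → ℂ) : Function.Periodic (ahat a) 1 := fun ω => by
  refine tsum_congr fun k => ?_
  have : -2 * π * Complex.I * k * ((ω + 1 : ℝ) : ℂ) =
      -2 * π * Complex.I * k * ω + (-k : ℤ) * (2 * π * Complex.I) := by
    push_cast; ring
  rw [this, Complex.exp_add, Complex.exp_int_mul_two_pi_mul_I, mul_one]

theorem Function.Periodic.le_iSup_Icc {f : ℝ → ℝ} {p : ℝ} (hf : Continuous f)
    (hper : Function.Periodic f p) (hp : 0 < p) (x : ℝ) : f x ≤ ⨆ y ∈ Icc 0 p, f y := by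
  obtain ⟨y, hy, hxy⟩ := hper.exists_mem_Ico₀ hp x
  have hbdd : BddAbove (⋃ y, range fun _ : y ∈ Icc 0 p => f y) :=
    (isCompact_Icc.image hf).bddAbove.mono <| by
      rintro _ ⟨_, ⟨y, rfl⟩, ⟨hy, rfl⟩⟩
      exact mem_image_of_mem f hy
  exact hxy ▸ le_ciSup₂ (f := fun y (_ : y ∈ Icc 0 p) => f y) hbdd y (Ico_subset_Icc_self hy)

def nodeGaps (a : ℤ → ℂ) (m : ℕ) : Set ℝ :=
  {r | ∃ (i j : Fin m) (ω : ℝ), i ≠ j ∧ r = ‖ahat a ((ω + j) / m) - ahat a ((ω + i) / m)‖}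

theorem isCompact_nodeGaps {a : ℤ → ℂ} (ha : Summable fun k => ‖a k‖) (m : ℕ) :
    IsCompact (nodeGaps a m) := by
  have hunion : nodeGaps a m = ⋃ (i : Fin m) (j : Fin m) (_ : i ≠ j),
      range fun ω => ‖ahat a ((ω + j) / m) - ahat a ((ω + i) / m)‖ := by
    ext r
    simp [nodeGaps, eq_comm]
  have hnode : ∀ l : Fin m, Function.Periodic (fun ω => ahat a ((ω + l) / m)) (1 * m) :=
    fun l => ((ahat_periodic a).div_const m).add_const l
  rw [hunion]
  refine isCompact_iUnion fun i => isCompact_iUnion fun j => isCompact_iUnion fun _ => ?_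
  refine Function.Periodic.compact_of_continuous (c := 1 * m)
    (fun ω => congrArg₂ (‖· - ·‖) (hnode j ω) (hnode i ω))
    (by simpa using i.pos.ne') ?_
  exact ((continuous_ahat ha).comp (by fun_prop)).sub ((continuous_ahat ha).comp (by fun_prop))
    |>.norm

theorem nodeGaps_nonempty (a : ℤ → ℂ) {m : ℕ} (hm : 2 ≤ m) : (nodeGaps a m).Nonempty :=
  ⟨_, ⟨0, by omega⟩, ⟨1, by omega⟩, 0, by simp [Fin.ext_iff], rfl⟩

theorem pos_of_mem_nodeGaps {a : ℤ → ℂ} {m : ℕ}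
    (hdist : ∀ ω : ℝ, ∀ i j : Fin m, i ≠ j → ahat a ((ω + i) / m) ≠ ahat a ((ω + j) / m))
    {r : ℝ} (hr : r ∈ nodeGaps a m) : 0 < r := by
  obtain ⟨i, j, ω, hij, rfl⟩ := hr
  exact norm_pos_iff.mpr (sub_ne_zero.mpr (hdist ω j i hij.symm))

theorem vandA_eq_transpose_vandermonde (a : ℤ → ℂ) (m : ℕ) (ω : ℝ) :
    vandA a m ω = (Matrix.vandermonde fun j : Fin m => conj (ahat a ((ω + j) / m)))ᵀ :=
  rfl

theorem sum_norm_inv_vandA_le {a : ℤ → ℂ} {m : ℕ} {c M : ℝ} (hc : 0 < c)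
    (hgap : ∀ r ∈ nodeGaps a m, c ≤ r) (hM : ∀ ω, ‖ahat a ω‖ ≤ M) (ω : ℝ) (i : Fin m) :
    ∑ k, ‖(vandA a m ω)⁻¹ i k‖ ≤ c⁻¹ ^ (m - 1) * (1 + M) ^ (m - 1) := by
  rw [vandA_eq_transpose_vandermonde]
  refine Matrix.sum_norm_inv_vandermonde_transpose_le hc (fun i j hij => ?_) (fun j => ?_) i
  · rw [← map_sub, Complex.norm_conj]
    exact hgap _ ⟨j, i, ω, hij.symm, rfl⟩
  · rw [Complex.norm_conj]
    exact hM _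

/-- with pairwise-distinct nodes, pointwise inversion of `𝔄_m(ω)` defines a
bounded operator on `(L²(𝕋))^m` with
`‖𝔄_m⁻¹‖ ≤ √m · 𝔠^{−(m−1)} · (1 + max_ω |â(ω)|)^{m−1}`. -/
theorem vand_inverse_operator_bounded (a : ℤ → ℂ) (ha : Summable fun k => ‖a k‖)
    (m : ℕ) (hm : 2 ≤ m)
    (hdist : ∀ ω : ℝ, ∀ i j : Fin m, i ≠ j →
      ahat a ((ω + i) / m) ≠ ahat a ((ω + j) / m))
    (c : ℝ)
    (hc : c = sInf {r : ℝ | ∃ (i j : Fin m) (ω : ℝ), i ≠ j ∧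
      r = ‖ahat a ((ω + j) / m) - ahat a ((ω + i) / m)‖})
    (T : Lp (EuclideanSpace ℂ (Fin m)) 2 μT →L[ℂ] Lp (EuclideanSpace ℂ (Fin m)) 2 μT)
    (hT : ∀ x : Lp (EuclideanSpace ℂ (Fin m)) 2 μT,
      ∀ᵐ ω ∂μT, (T x : ℝ → EuclideanSpace ℂ (Fin m)) ω =
        (WithLp.equiv 2 (Fin m → ℂ)).symm
          (((vandA a m ω)⁻¹).mulVec
            (WithLp.equiv 2 (Fin m → ℂ) ((x : ℝ → EuclideanSpace ℂ (Fin m)) ω)))) :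
    0 < c ∧
    ‖T‖ ≤ Real.sqrt m * c⁻¹ ^ (m - 1) *
      (1 + ⨆ ω ∈ Set.Icc (0 : ℝ) 1, ‖ahat a ω‖) ^ (m - 1) := by
  change c = sInf (nodeGaps a m) at hc
  have hgaps := isCompact_nodeGaps ha m
  have hc0 : 0 < c := hc ▸ pos_of_mem_nodeGaps hdist (hgaps.sInf_mem (nodeGaps_nonempty a hm))
  have hgap : ∀ r ∈ nodeGaps a m, c ≤ r := fun r hr => hc ▸ csInf_le hgaps.bddBelow hr
  have hM : ∀ ω, ‖ahat a ω‖ ≤ ⨆ ω ∈ Icc (0 : ℝ) 1, ‖ahat a ω‖ :=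
    ((ahat_periodic a).comp _).le_iSup_Icc (continuous_ahat ha).norm one_pos
  have hM0 := (norm_nonneg _).trans (hM 0)
  refine ⟨hc0, ContinuousLinearMap.opNorm_le_bound _ (by positivity) fun x => ?_⟩
  refine Lp.norm_le_mul_norm_of_ae_le_mul ?_
  filter_upwards [hT x] with ω hω
  simpa [hω, mul_assoc] using
    EuclideanSpace.norm_mulVec_le_of_sum_norm_le (sum_norm_inv_vandA_le hc0 hgap hM ω) _
end
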